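/- arXiv:2503.20292 — 2 statements merged into one kernel-verified Lean document; each statement's English description precedes it below -/
import Mathlib

section
/- Let C > 0, K > 0, T > 0, and let G : [0, T] → ℝ be continuous on [0,T], differentiable on (0, T], with lim sup_{t→0⁺} t·G(t) ≤ 0, and such that G'(t) ≤ C t⁻² - G(t)²/K² whenever G(t) > 0. Then t·G(t) ≤ (K² + √(K⁴ + 4CK²))/2 for all t ∈ (0, T]. -/
/-!
Let `φ t = t * G t` and let `M` be the positive root of `x ^ 2 = K ^ 2 * x + C * K ^ 2`.
If `φ` exceeded `M` somewhere, then, since `φ 0 = 0`, there would be a first time `t₀` at which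
`φ` reaches that value. There `φ' t₀ ≥ 0`, while the differential inequality gives
`t₀ * φ' t₀ ≤ φ t₀ + C - φ t₀ ^ 2 / K ^ 2`; hence `φ t₀ ^ 2 ≤ K ^ 2 * φ t₀ + C * K ^ 2`,
i.e. `φ t₀ ≤ M`, a contradiction.
-/

open Set Filter Topology

theorem le_quadratic_root_of_sq_le {b c x : ℝ} (h : x ^ 2 ≤ b * x + c) :
    x ≤ (b + Real.sqrt (b ^ 2 + 4 * c)) / 2 := by
  have hsq : (2 * x - b) ^ 2 ≤ b ^ 2 + 4 * c := by nlinarith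
  linarith [(le_abs_self _).trans (Real.abs_le_sqrt hsq)]

theorem ContinuousOn.exists_first_ge {f : ℝ → ℝ} {a b c : ℝ} (hab : a ≤ b)
    (hf : ContinuousOn f (Icc a b)) (ha : f a < c) (hb : c ≤ f b) :
    ∃ t ∈ Ioc a b, c ≤ f t ∧ ∀ s ∈ Ico a t, f s < c := by
  set S := Icc a b ∩ f ⁻¹' Ici c
  have hS : IsClosed S := hf.preimage_isClosed_of_isClosed isClosed_Icc isClosed_Ici
  have hbdd : BddBelow S := ⟨a, fun s hs => hs.1.1⟩
  obtain ⟨⟨hat, htb⟩, hct⟩ : sInf S ∈ S := hS.csInf_mem ⟨b, ⟨hab, le_rfl⟩, hb⟩ hbdd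
  have hat' : a < sInf S := lt_of_le_of_ne hat fun h => (h ▸ ha).not_ge hct
  refine ⟨sInf S, ⟨hat', htb⟩, hct, fun s ⟨has, hst⟩ => ?_⟩
  by_contra! hcs
  exact hst.not_ge (csInf_le hbdd ⟨⟨has, hst.le.trans htb⟩, hcs⟩)

theorem HasDerivAt.nonneg_of_eventually_le_nhdsLT {f : ℝ → ℝ} {f' a : ℝ}
    (hf : HasDerivAt f f' a) (h : ∀ᶠ x in 𝓝[<] a, f x ≤ f a) : 0 ≤ f' := by
  refine ge_of_tendsto (hasDerivAt_iff_tendsto_slope_left_right.mp hf).1 ?_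
  filter_upwards [h, self_mem_nhdsWithin] with x hfx hxa
  rw [slope_def_field]
  exact div_nonneg_of_nonpos (sub_nonpos.2 hfx) (sub_nonpos.2 (le_of_lt hxa))

theorem sq_le_of_riccati_of_deriv_nonneg {C K t g g' : ℝ} (hK : K ≠ 0) (ht : 0 < t)
    (hφ' : 0 ≤ g + t * g') (hg' : g' ≤ C * t⁻¹ ^ 2 - g ^ 2 / K ^ 2) :
    (t * g) ^ 2 ≤ K ^ 2 * (t * g) + C * K ^ 2 := by
  have hmul : 0 ≤ t * K ^ 2 * (g + t * g') := by positivity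
  have hbound : t * K ^ 2 * (g + t * g') ≤ t * K ^ 2 * (g + t * (C * t⁻¹ ^ 2 - g ^ 2 / K ^ 2)) :=
    mul_le_mul_of_nonneg_left (by nlinarith) (by positivity)
  have hexpand : t * K ^ 2 * (g + t * (C * t⁻¹ ^ 2 - g ^ 2 / K ^ 2))
      = K ^ 2 * (t * g) + C * K ^ 2 - (t * g) ^ 2 := by
    field_simp
    ring
  linarith

theorem stmt_13_general (C K T : ℝ) (hK : 0 < K)
    (G G' : ℝ → ℝ) (hcont : ContinuousOn G (Set.Icc 0 T))
    (hderiv : ∀ t ∈ Set.Ioc 0 T, HasDerivAt G (G' t) t)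
    (hineq : ∀ t ∈ Set.Ioc 0 T, 0 < G t → G' t ≤ C * t⁻¹ ^ 2 - (G t) ^ 2 / K ^ 2) :
    ∀ t ∈ Set.Ioc 0 T, t * G t ≤ (K ^ 2 + Real.sqrt (K ^ 4 + 4 * C * K ^ 2)) / 2 := by
  intro t₁ ht₁
  by_contra! hM
  have hMpos : 0 < (K ^ 2 + Real.sqrt (K ^ 4 + 4 * C * K ^ 2)) / 2 := by positivity
  have hφ : ContinuousOn (fun t => t * G t) (Icc 0 t₁) :=
    continuousOn_id.mul (hcont.mono (Icc_subset_Icc_right ht₁.2))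
  obtain ⟨t₀, ⟨ht₀, ht₀t₁⟩, hφt₀, hbelow⟩ :=
    hφ.exists_first_ge ht₁.1.le (by simpa using hMpos.trans hM) le_rfl
  have ht₀T : t₀ ∈ Ioc 0 T := ⟨ht₀, ht₀t₁.trans ht₁.2⟩
  have hφ' : 0 ≤ G t₀ + t₀ * G' t₀ := by
    refine (((hasDerivAt_id t₀).mul (hderiv t₀ ht₀T)).nonneg_of_eventually_le_nhdsLT ?_).trans_eq
      (by simp)
    filter_upwards [Ico_mem_nhdsLT ht₀] with s hs
    exact (hbelow s hs).le.trans hφt₀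
  have hG : 0 < G t₀ := pos_of_mul_pos_right (hMpos.trans (hM.trans_le hφt₀)) ht₀.le
  have hquad := sq_le_of_riccati_of_deriv_nonneg hK.ne' ht₀ hφ' (hineq t₀ ht₀T hG)
  have hroot := le_quadratic_root_of_sq_le hquad
  rw [← pow_mul, ← mul_assoc] at hroot
  linarith

theorem stmt_13 (C K T : ℝ) (hC : 0 < C) (hK : 0 < K) (hT : 0 < T)
    (G G' : ℝ → ℝ) (hcont : ContinuousOn G (Set.Icc 0 T))
    (hderiv : ∀ t ∈ Set.Ioc 0 T, HasDerivAt G (G' t) t)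
    (hineq : ∀ t ∈ Set.Ioc 0 T, 0 < G t → G' t ≤ C * t⁻¹ ^ 2 - (G t) ^ 2 / K ^ 2)
    (hlim : Filter.limsup (fun t => t * G t) (nhdsWithin 0 (Set.Ioi 0)) ≤ 0) :
    ∀ t ∈ Set.Ioc 0 T, t * G t ≤ (K ^ 2 + Real.sqrt (K ^ 4 + 4 * C * K ^ 2)) / 2 :=
  stmt_13_general C K T hK G G' hcont hderiv hineq
end

section
/- Let A : [t₀, t₁] → Sym(n, ℝ) be a C¹ family of symmetric n×n real matrices with A(t₀) positive definite. Suppose that for every t ∈ (t₀, t₁] and every unit vector v ∈ ℝⁿ, if A(t) is positive semidefinite and v^T A(t) v = 0, then v^T A'(t) v > 0. Then A(t) is positive definite for all t ∈ [t₀, t₁]. -/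
/-!
Positive definiteness of `v ↦ vᵀ A(t) v` is an open condition in `t` (by compactness of the unit
sphere), so if it fails somewhere there is a first failure time `τ > t₀`. As a limit of positive
definite matrices, `A(τ)` is positive semidefinite, and it has a null vector `w`. Then
`t ↦ wᵀ A(t) w` is positive on `(t₀, τ)` and vanishes at `τ`, so its derivative `wᵀ A'(τ) w` at
`τ` is nonpositive, contradicting the hypothesis at `τ` (which is scale invariant, so unit vectors
suffice).
-/

open Matrix

open Filter Topology Set

namespace Matrix

variable {ι R : Type*} [Fintype ι]

theorem smul_dotProduct_mulVec_smul [CommRing R] (c : R) (M : Matrix ι ι R) (v : ι → R) :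
    (c • v) ⬝ᵥ (M *ᵥ (c • v)) = c * c * (v ⬝ᵥ (M *ᵥ v)) := by
  rw [smul_dotProduct, mulVec_smul, dotProduct_smul, smul_eq_mul, smul_eq_mul, mul_assoc]

section TrivialStar

variable [Ring R] [PartialOrder R] [StarRing R] [TrivialStar R] {M : Matrix ι ι R}

theorem IsSymm.posDef_iff (hM : M.IsSymm) :
    M.PosDef ↔ ∀ ⦃x⦄, x ≠ 0 → 0 < x ⬝ᵥ (M *ᵥ x) := by
  simp [posDef_iff_dotProduct_mulVec, hM]

theorem IsSymm.posSemidef_iff (hM : M.IsSymm) :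
    M.PosSemidef ↔ ∀ x, 0 ≤ x ⬝ᵥ (M *ᵥ x) := by
  simp [posSemidef_iff_dotProduct_mulVec, hM]

end TrivialStar

theorem continuousAt_dotProduct_mulVec {X : Type*} [TopologicalSpace X] {A : X → Matrix ι ι ℝ}
    {x : X} (hA : ContinuousAt A x) (v : ι → ℝ) :
    ContinuousAt (fun p : X × (ι → ℝ) => p.2 ⬝ᵥ (A p.1 *ᵥ p.2)) (x, v) := by
  have hQ : Continuous (fun q : Matrix ι ι ℝ × (ι → ℝ) => q.2 ⬝ᵥ (q.1 *ᵥ q.2)) :=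
    continuous_snd.dotProduct (continuous_fst.matrix_mulVec continuous_snd)
  exact hQ.continuousAt.comp ((hA.comp continuousAt_fst).prodMk continuousAt_snd)

theorem eventually_forall_dotProduct_mulVec_pos {X : Type*} [TopologicalSpace X]
    {A : X → Matrix ι ι ℝ} {x : X} (hA : ContinuousAt A x)
    (hx : ∀ ⦃v⦄, v ≠ 0 → 0 < v ⬝ᵥ (A x *ᵥ v)) :
    ∀ᶠ y in 𝓝 x, ∀ ⦃v⦄, v ≠ 0 → 0 < v ⬝ᵥ (A y *ᵥ v) := by
  have hsphere : ∀ᶠ y in 𝓝 x, ∀ u ∈ Metric.sphere (0 : ι → ℝ) 1, 0 < u ⬝ᵥ (A y *ᵥ u) := by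
    refine (isCompact_sphere 0 1).eventually_forall_of_forall_eventually fun u hu => ?_
    have hu0 : u ≠ 0 := ne_zero_of_mem_unit_sphere ⟨u, hu⟩
    exact (continuousAt_dotProduct_mulVec hA u).eventually_const_lt (hx hu0)
  filter_upwards [hsphere] with y hy v hv
  have hnorm : 0 < ‖v‖ := norm_pos_iff.2 hv
  have hv_eq : v = ‖v‖ • (‖v‖⁻¹ • v) := by rw [smul_inv_smul₀ hnorm.ne']
  rw [hv_eq, smul_dotProduct_mulVec_smul]
  exact mul_pos (mul_pos hnorm hnorm)
    (hy _ (by simp [norm_smul, hnorm.ne']))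

theorem dotProduct_mulVec_pos_of_forall_norm_eq_one {M N : Matrix ι ι ℝ}
    (h : ∀ v : EuclideanSpace ℝ ι, ‖v‖ = 1 → v ⬝ᵥ (M *ᵥ v) = 0 → 0 < v ⬝ᵥ (N *ᵥ v))
    {w : ι → ℝ} (hw : w ≠ 0) (hMw : w ⬝ᵥ (M *ᵥ w) = 0) : 0 < w ⬝ᵥ (N *ᵥ w) := by
  have hw' : WithLp.toLp 2 w ≠ 0 := by simpa using hw
  have hv := h (‖WithLp.toLp 2 w‖⁻¹ • WithLp.toLp 2 w) (norm_smul_inv_norm hw')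
  simp only [WithLp.ofLp_smul, smul_dotProduct_mulVec_smul, hMw, mul_zero, forall_const] at hv
  exact pos_of_mul_pos_right hv (mul_self_nonneg _)

theorem hasDerivAt_dotProduct_mulVec {𝕜 : Type*} [NontriviallyNormedField 𝕜]
    {A A' : 𝕜 → Matrix ι ι 𝕜} {t : 𝕜} (hA : ∀ i j, HasDerivAt (fun s => A s i j) (A' t i j) t)
    (v : ι → 𝕜) : HasDerivAt (fun s => v ⬝ᵥ (A s *ᵥ v)) (v ⬝ᵥ (A' t *ᵥ v)) t := by
  have := HasDerivAt.fun_sum (u := Finset.univ) fun i _ =>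
    HasDerivAt.fun_sum (u := Finset.univ) fun j _ => ((hA i j).mul_const (v j)).const_mul (v i)
  simpa [dotProduct, mulVec, Finset.mul_sum] using this

end Matrix

theorem HasDerivAt.nonpos_of_forall_Ioo_le {f : ℝ → ℝ} {f' a b : ℝ} (hf : HasDerivAt f f' b)
    (hab : a < b) (h : ∀ t ∈ Ioo a b, f b ≤ f t) : f' ≤ 0 := by
  refine le_of_tendsto (hasDerivAt_iff_tendsto_slope_left_right.1 hf).1 ?_
  filter_upwards [Ioo_mem_nhdsLT hab] with t ht
  rw [slope_def_field]
  exact div_nonpos_of_nonneg_of_nonpos (sub_nonneg.2 (h t ht)) (sub_nonpos.2 ht.2.le)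

theorem exists_first_failure {p : ℝ → Prop} {a b : ℝ} (hpa : p a)
    (hopen : ∀ t ∈ Icc a b, p t → ∀ᶠ s in 𝓝 t, p s) (hfail : ∃ t ∈ Icc a b, ¬ p t) :
    ∃ τ ∈ Ioc a b, ¬ p τ ∧ ∀ t ∈ Ico a τ, p t := by
  set C := {t ∈ Icc a b | ¬ p t}
  obtain ⟨t, htC⟩ : C.Nonempty := hfail
  have hCbdd : BddBelow C := ⟨a, fun t ht => ht.1.1⟩
  have haτ : a ≤ sInf C := le_csInf ⟨t, htC⟩ fun s hs => hs.1.1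
  have hτb : sInf C ≤ b := (csInf_le hCbdd htC).trans htC.1.2
  have hbefore : ∀ s ∈ Ico a (sInf C), p s := fun s hs => by
    by_contra hps
    exact (csInf_le hCbdd ⟨⟨hs.1, hs.2.le.trans hτb⟩, hps⟩).not_gt hs.2
  have hτ : ¬ p (sInf C) := fun hpτ => by
    obtain ⟨ε, hε, hball⟩ := Metric.eventually_nhds_iff.1 (hopen _ ⟨haτ, hτb⟩ hpτ)
    obtain ⟨s, hsC, hsε⟩ := exists_lt_of_csInf_lt ⟨t, htC⟩ (lt_add_of_pos_right (sInf C) hε)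
    refine hsC.2 (hball ?_)
    rw [Real.dist_eq, abs_lt]
    constructor <;> linarith [csInf_le hCbdd hsC]
  exact ⟨sInf C, ⟨haτ.lt_of_ne fun haτ_eq => hτ (haτ_eq ▸ hpa), hτb⟩, hτ, hbefore⟩

theorem stmt_15_general (n : ℕ) (t₀ t₁ : ℝ)
    (A A' : ℝ → Matrix (Fin n) (Fin n) ℝ)
    (hsymm : ∀ t ∈ Set.Icc t₀ t₁, (A t).IsSymm)
    (hderiv : ∀ t ∈ Set.Icc t₀ t₁, ∀ i j, HasDerivAt (fun s => A s i j) (A' t i j) t)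
    (hpos0 : (A t₀).PosDef)
    (hkey : ∀ t ∈ Set.Ioc t₀ t₁, ∀ v : EuclideanSpace ℝ (Fin n), ‖v‖ = 1 →
      (A t).PosSemidef → v ⬝ᵥ ((A t) *ᵥ v) = 0 → 0 < v ⬝ᵥ ((A' t) *ᵥ v)) :
    ∀ t ∈ Set.Icc t₀ t₁, (A t).PosDef := by
  intro t ht
  rw [(hsymm t ht).posDef_iff]
  by_contra hfail
  obtain ⟨τ, hτ, hτfail, hbefore⟩ :=
    exists_first_failure (p := fun t => ∀ ⦃v⦄, v ≠ 0 → 0 < v ⬝ᵥ (A t *ᵥ v))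
      (fun v hv => by simpa using hpos0.dotProduct_mulVec_pos hv)
      (fun s hs hpos => eventually_forall_dotProduct_mulVec_pos (continuousAt_pi.2 fun i =>
        continuousAt_pi.2 fun j => (hderiv s hs i j).continuousAt) hpos)
      ⟨t, ht, hfail⟩
  have hτIcc : τ ∈ Icc t₀ t₁ := Ioc_subset_Icc_self hτ
  have hquad (v) := hasDerivAt_dotProduct_mulVec (hderiv τ hτIcc) v
  have hpsd : ∀ v, 0 ≤ v ⬝ᵥ (A τ *ᵥ v) := fun v => by
    rcases eq_or_ne v 0 with rfl | hv
    · simp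
    refine ge_of_tendsto ((hquad v).continuousAt.continuousWithinAt (s := Iio τ)) ?_
    filter_upwards [Ico_mem_nhdsLT_of_mem ⟨hτ.1, le_rfl⟩] with s hs using (hbefore s hs hv).le
  obtain ⟨w, hw, hwτ⟩ : ∃ w ≠ 0, w ⬝ᵥ (A τ *ᵥ w) ≤ 0 := by simpa using hτfail
  have hwτ : w ⬝ᵥ (A τ *ᵥ w) = 0 := hwτ.antisymm (hpsd w)
  have hderiv_pos := dotProduct_mulVec_pos_of_forall_norm_eq_one
    (fun v hv => hkey τ hτ v hv ((hsymm τ hτIcc).posSemidef_iff.2 hpsd)) hw hwτ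
  refine hderiv_pos.not_ge ((hquad w).nonpos_of_forall_Ioo_le hτ.1 fun s hs => ?_)
  rw [hwτ]
  exact (hbefore s (Ioo_subset_Ico_self hs) hw).le

theorem stmt_15 (n : ℕ) (t₀ t₁ : ℝ) (ht : t₀ ≤ t₁)
    (A A' : ℝ → Matrix (Fin n) (Fin n) ℝ)
    (hsymm : ∀ t ∈ Set.Icc t₀ t₁, (A t).IsSymm)
    (hC1 : ∀ i j, ContinuousOn (fun t => A' t i j) (Set.Icc t₀ t₁))
    (hderiv : ∀ t ∈ Set.Icc t₀ t₁, ∀ i j, HasDerivAt (fun s => A s i j) (A' t i j) t)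
    (hpos0 : (A t₀).PosDef)
    (hkey : ∀ t ∈ Set.Ioc t₀ t₁, ∀ v : EuclideanSpace ℝ (Fin n), ‖v‖ = 1 →
      (A t).PosSemidef → v ⬝ᵥ ((A t) *ᵥ v) = 0 → 0 < v ⬝ᵥ ((A' t) *ᵥ v)) :
    ∀ t ∈ Set.Icc t₀ t₁, (A t).PosDef :=
  stmt_15_general n t₀ t₁ A A' hsymm hderiv hpos0 hkey
end
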